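/- arXiv:math/0104222 — 3 statements merged into one kernel-verified Lean document; each statement's English description precedes it below -/
import Mathlib

section
/- Let 0 < W ≤ d_1 + ⋯ + d_s and let a be the unique positive integer with Σ_{i=a+1}^{μ} i·ν_i < W ≤ Σ_{i=a}^{μ} i·ν_i. Then M(W) = ⌈ (W − Σ_{i=a+1}^{μ} (i−a)·ν_i) / a ⌉; that is, the minimum number of places whose degrees sum to at least W is given by this closed-form ceiling expression. -/
/-!
Put `C = ∑ⱼ (dⱼ - a)` (truncated subtraction). Since `dⱼ ≤ (dⱼ - a) + a`, any `k` places have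
total degree at most `C + a k`, with equality for every set that contains all places of degree
`> a` and otherwise only places of degree `a`. The hypotheses on `a` place the least `k` with
`W ≤ C + a k`, namely `⌈(W - C) / a⌉`, between the numbers of places of degree `> a` and of
degree `≥ a`, so a set of that size attaining `C + a k` exists.
-/

open Finset

section MinCard

variable {ι : Type*} [Fintype ι] (d : ι → ℕ) (a : ℕ)

theorem sum_le_sum_tsub_add_mul_card (S : Finset ι) :
    ∑ j ∈ S, d j ≤ ∑ j, (d j - a) + a * #S :=
  calc ∑ j ∈ S, d j ≤ ∑ j ∈ S, ((d j - a) + a) := sum_le_sum fun _ _ => le_tsub_add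
    _ = ∑ j ∈ S, (d j - a) + a * #S := by rw [sum_add_distrib, sum_const, smul_eq_mul, mul_comm]
    _ ≤ ∑ j, (d j - a) + a * #S := by gcongr; exact subset_univ S

theorem sum_eq_sum_tsub_add_mul_card {S : Finset ι} (hgt : ∀ j, a < d j → j ∈ S)
    (hge : ∀ j ∈ S, a ≤ d j) : ∑ j ∈ S, d j = ∑ j, (d j - a) + a * #S := by
  have houtside : ∀ j ∈ univ, j ∉ S → d j - a = 0 := fun j _ hj =>
    Nat.sub_eq_zero_of_le (not_lt.1 (mt (hgt j) hj))
  rw [← sum_subset (subset_univ S) houtside, mul_comm, ← smul_eq_mul, ← sum_const,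
    ← sum_add_distrib]
  exact sum_congr rfl fun j hj => (Nat.sub_add_cancel (hge j hj)).symm

theorem sum_mul_card_fiber (I : Finset ℕ) (f : ℕ → ℕ) :
    ∑ i ∈ I, f i * #{j | d j = i} = ∑ j with d j ∈ I, f (d j) := by
  rw [← sum_fiberwise_eq_sum_filter]
  refine sum_congr rfl fun i _ => ?_
  rw [sum_congr rfl fun j hj => by rw [(mem_filter.1 hj).2], sum_const, smul_eq_mul, mul_comm]

variable {d a}

theorem sInf_card_eq_of_bounds {W k : ℕ}
    (hk_ge : #{j | a < d j} ≤ k) (hk_le : k ≤ #{j | a ≤ d j})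
    (hle : W ≤ ∑ j, (d j - a) + a * k) (hlt : ∑ j, (d j - a) + a * k < W + a) :
    sInf {m : ℕ | ∃ S : Finset ι, #S = m ∧ W ≤ ∑ i ∈ S, d i} = k := by
  obtain ⟨S, hgtS, hSge, hS⟩ := exists_subsuperset_card_eq
    (monotone_filter_right _ fun _ _ => le_of_lt) hk_ge hk_le
  have hSsum : ∑ j ∈ S, d j = ∑ j, (d j - a) + a * k := by
    rw [← hS]
    refine sum_eq_sum_tsub_add_mul_card d a (fun j hj => hgtS ?_) fun j hj => ?_
    · simpa using hj
    · simpa using hSge hj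
  have hmem : k ∈ {m : ℕ | ∃ S : Finset ι, #S = m ∧ W ≤ ∑ i ∈ S, d i} := ⟨S, hS, hSsum ▸ hle⟩
  refine le_antisymm (Nat.sInf_le hmem) (le_csInf ⟨k, hmem⟩ ?_)
  rintro _ ⟨T, rfl, hT⟩
  by_contra! hTk
  have := sum_le_sum_tsub_add_mul_card d a T
  nlinarith

theorem sInf_card_eq_ceil {W : ℕ} (ha : 0 < a) (hlt : ∑ j with a < d j, d j < W)
    (hle : W ≤ ∑ j with a ≤ d j, d j) :
    ((sInf {m : ℕ | ∃ S : Finset ι, #S = m ∧ W ≤ ∑ i ∈ S, d i} : ℕ) : ℤ)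
      = ⌈((W : ℚ) - (∑ j, (d j - a) : ℕ)) / a⌉ := by
  set C := ∑ j, (d j - a)
  have hgt_sum : ∑ j with a < d j, d j = C + a * #{j | a < d j} :=
    sum_eq_sum_tsub_add_mul_card d a (by simp) (by simp +contextual [le_of_lt])
  have hge_sum : ∑ j with a ≤ d j, d j = C + a * #{j | a ≤ d j} :=
    sum_eq_sum_tsub_add_mul_card d a (by simp +contextual [le_of_lt]) (by simp)
  have haQ : (0 : ℚ) < a := by exact_mod_cast ha
  have hCW : C ≤ W := by omega
  have hx : 0 ≤ ((W : ℚ) - C) / a := div_nonneg (sub_nonneg.2 (by exact_mod_cast hCW)) haQ.le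
  set k := ⌈((W : ℚ) - C) / a⌉₊
  have hWk : W ≤ C + a * k := by
    have := (div_le_iff₀ haQ).1 (Nat.le_ceil (((W : ℚ) - C) / a))
    exact_mod_cast (by linarith : (W : ℚ) ≤ C + a * k)
  have hkW : C + a * k < W + a := by
    have := (lt_div_iff₀ haQ).1 (sub_lt_iff_lt_add.2 (Nat.ceil_lt_add_one hx))
    exact_mod_cast (by linarith : (C : ℚ) + a * k < W + a)
  rw [← Int.natCast_ceil_eq_ceil hx, sInf_card_eq_of_bounds (by nlinarith) (by nlinarith) hWk hkW]

end MinCard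

theorem min_subset_closed_formula_general
    (s : ℕ) (d : Fin s → ℕ)
    (ν : ℕ → ℕ) (hν : ∀ k, ν k = (Finset.univ.filter (fun j : Fin s => d j = k)).card)
    (μ : ℕ) (hμ : μ = Finset.univ.sup d)
    (W : ℕ)
    (a : ℕ) (ha : 0 < a)
    (halt : ∑ i ∈ Finset.Icc (a + 1) μ, i * ν i < W)
    (hage : W ≤ ∑ i ∈ Finset.Icc a μ, i * ν i) :
    ((sInf {k : ℕ | ∃ S : Finset (Fin s), S.card = k ∧ W ≤ ∑ i ∈ S, d i} : ℕ) : ℤ)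
      = ⌈((W : ℚ) - ((∑ i ∈ Finset.Icc (a + 1) μ, (i - a) * ν i : ℕ) : ℚ)) / (a : ℚ)⌉ := by
  obtain rfl : ν = fun k => #{j | d j = k} := funext hν
  have hdμ : ∀ j, d j ≤ μ := fun j => hμ ▸ le_sup (mem_univ j)
  have hfilter (lo : ℕ) : (univ.filter fun j => d j ∈ Icc lo μ) = univ.filter (lo ≤ d ·) :=
    filter_congr fun j _ => by simp [hdμ j]
  have hsum (lo : ℕ) : ∑ i ∈ Icc lo μ, i * #{j | d j = i} = ∑ j with lo ≤ d j, d j := by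
    rw [← hfilter]; exact sum_mul_card_fiber d _ id
  have hC : ∑ i ∈ Icc (a + 1) μ, (i - a) * #{j | d j = i} = ∑ j, (d j - a) := by
    rw [sum_mul_card_fiber, hfilter]
    exact sum_filter_of_ne fun j _ h => by omega
  rw [hsum] at halt hage
  rw [hC]
  exact sInf_card_eq_ceil ha halt hage

/-- Let `0 < W ≤ d_1 + ⋯ + d_s` and let `a` be the unique positive
integer with `Σ_{i=a+1}^{μ} i·ν_i < W ≤ Σ_{i=a}^{μ} i·ν_i`.  Then
`M(W) = ⌈ (W − Σ_{i=a+1}^{μ} (i−a)·ν_i) / a ⌉`; i.e., the minimum number of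
places whose degrees sum to at least `W` is given by this closed-form ceiling
expression (Remark 2 of the paper: the Özbudak–Stichtenoth bound with
`W = n − deg G`). -/
theorem min_subset_closed_formula
    (s : ℕ) (hs : 0 < s) (d : Fin s → ℕ) (hd : ∀ i, 0 < d i)
    (ν : ℕ → ℕ) (hν : ∀ k, ν k = (Finset.univ.filter (fun j : Fin s => d j = k)).card)
    (μ : ℕ) (hμ : μ = Finset.univ.sup d)
    (W : ℕ) (hW : 0 < W) (hWle : W ≤ ∑ i, d i)
    (a : ℕ) (ha : 0 < a)
    (halt : ∑ i ∈ Finset.Icc (a + 1) μ, i * ν i < W)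
    (hage : W ≤ ∑ i ∈ Finset.Icc a μ, i * ν i) :
    ((sInf {k : ℕ | ∃ S : Finset (Fin s), S.card = k ∧ W ≤ ∑ i ∈ S, d i} : ℕ) : ℤ)
      = ⌈((W : ℚ) - ((∑ i ∈ Finset.Icc (a + 1) μ, (i - a) * ν i : ℕ) : ℚ)) / (a : ℚ)⌉ :=
  min_subset_closed_formula_general s d ν hν μ hμ W a ha halt hage
end

section
/- (Proposition 1.) Let x ∈ F^s with φ(x) ≠ 0, put W = w(φ(x)), and let a be the unique positive integer with Σ_{i=a+1}^{μ} i·ν_i < W ≤ Σ_{i=a}^{μ} i·ν_i, where ν_i = #{ j : d_j = i } and μ = max_j d_j. Then w(x) ≥ ⌈ (W − Σ_{i=a+1}^{μ} (i−a)·ν_i) / a ⌉. -/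
/-!
Since `σ y = 0` only for `y = 0`, the block of `φ(x)` belonging to a coordinate `x_i` is
entirely nonzero or entirely zero, so `W = Σ_{x_i ≠ 0} d_i`. Bounding each `d_i` by
`a + (d_i - a)` and extending the sum of the excesses `d_i - a` to all coordinates gives
`W ≤ a·w(x) + Σ_j (d_j - a)`, and grouping the last sum by the value of `d_j` turns it into
`Σ_{i=a+1}^{μ} (i - a)·ν_i`.
-/

open Finset

theorem Function.iterate_eq_zero_iff {M : Type*} [Zero M] {f : M → M}
    (hf : ∀ y, f y = 0 ↔ y = 0) (n : ℕ) (y : M) : f^[n] y = 0 ↔ y = 0 := by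
  induction n generalizing y with
  | zero => rfl
  | succ n ih => rw [Function.iterate_succ_apply, ih, hf]

namespace Finset

variable {ι : Type*} [Fintype ι]

theorem card_filter_sigma_ne_zero {M N : Type*} [Zero M] [DecidableEq M] [Zero N]
    [DecidableEq N] (d : ι → ℕ) (x : ι → M) (v : (Σ i, Fin (d i)) → N)
    (hv : ∀ i j, v ⟨i, j⟩ = 0 ↔ x i = 0) :
    #{t | v t ≠ 0} = ∑ i with x i ≠ 0, d i := by
  have : ({t | v t ≠ 0} : Finset (Σ i, Fin (d i))) =
      ({i | x i ≠ 0} : Finset ι).sigma fun _ => univ := by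
    ext ⟨i, j⟩
    simp [hv]
  simp [this, card_sigma]

theorem sum_Icc_tsub_mul_card_eq_sum_tsub (d : ι → ℕ) {a μ : ℕ} (hμ : ∀ j, d j ≤ μ) :
    ∑ i ∈ Icc (a + 1) μ, (i - a) * #{j | d j = i} = ∑ j, (d j - a) := by
  calc ∑ i ∈ Icc (a + 1) μ, (i - a) * #{j | d j = i}
      = ∑ i ∈ Icc (a + 1) μ, ∑ j with d j = i, (i - a) := by
        simp [sum_const, mul_comm]
    _ = ∑ j with d j ∈ Icc (a + 1) μ, (d j - a) := sum_fiberwise_eq_sum_filter' _ _ _ _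
    _ = ∑ j, (d j - a) := sum_filter_of_ne fun j _ hj => by
        simp only [mem_Icc]; exact ⟨by omega, hμ j⟩

theorem sum_le_mul_card_add_sum_tsub (d : ι → ℕ) (a : ℕ) (S : Finset ι) :
    ∑ i ∈ S, d i ≤ a * #S + ∑ j, (d j - a) :=
  calc ∑ i ∈ S, d i ≤ ∑ i ∈ S, (a + (d i - a)) := sum_le_sum fun _ _ => le_add_tsub
    _ = a * #S + ∑ i ∈ S, (d i - a) := by rw [sum_add_distrib, sum_const, smul_eq_mul, mul_comm]
    _ ≤ a * #S + ∑ j, (d j - a) := by gcongr; exact subset_univ S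

end Finset

theorem proposition_weight_lower_bound_general
    (p e : ℕ) (hp : p.Prime)
    (q : ℕ) (hq : q = p ^ e)
    (F : Type*) [Field F] [DecidableEq F]
    (σ : F → F) (hσ : ∀ x, σ x = x ^ q)
    (s : ℕ) (d : Fin s → ℕ)
    (φ : (Fin s → F) → ((Σ i : Fin s, Fin (d i)) → F))
    (hφ : ∀ x (i : Fin s) (j : Fin (d i)), φ x ⟨i, j⟩ = σ^[(j : ℕ)] (x i))
    (ν : ℕ → ℕ) (hν : ∀ k, ν k = (Finset.univ.filter (fun j : Fin s => d j = k)).card)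
    (μ : ℕ) (hμ : μ = Finset.univ.sup d)
    (x : Fin s → F)
    (W : ℕ)
    (hW : W = (Finset.univ.filter (fun t : Σ i : Fin s, Fin (d i) => φ x t ≠ 0)).card)
    (a : ℕ) (ha : 0 < a) :
    ⌈((W : ℚ) - ((∑ i ∈ Finset.Icc (a + 1) μ, (i - a) * ν i : ℕ) : ℚ)) / (a : ℚ)⌉
      ≤ ((Finset.univ.filter (fun i : Fin s => x i ≠ 0)).card : ℤ) := by
  have hσ_zero : ∀ y, σ y = 0 ↔ y = 0 := fun y => by
    rw [hσ, pow_eq_zero_iff (hq ▸ pow_ne_zero e hp.ne_zero)]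
  have hW_sum : W = ∑ i with x i ≠ 0, d i := by
    rw [hW, card_filter_sigma_ne_zero d x (φ x) fun i j => by
      rw [hφ, Function.iterate_eq_zero_iff hσ_zero]]
  have hν_sum : ∑ i ∈ Icc (a + 1) μ, (i - a) * ν i = ∑ j, (d j - a) := by
    simp only [hν]
    exact sum_Icc_tsub_mul_card_eq_sum_tsub d fun j => hμ ▸ le_sup (mem_univ j)
  have hW_le : (W : ℚ) ≤ a * #{i | x i ≠ 0} + ((∑ i ∈ Icc (a + 1) μ, (i - a) * ν i : ℕ) : ℚ) := by
    rw [hW_sum, hν_sum]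
    exact_mod_cast sum_le_mul_card_add_sum_tsub d a _
  rw [Int.ceil_le, Int.cast_natCast, div_le_iff₀ (by exact_mod_cast ha)]
  linarith

/-- Proposition 1: Let `x ∈ F^s` with `φ(x) ≠ 0`, put
`W = w(φ(x))`, and let `a` be the unique positive integer with
`Σ_{i=a+1}^{μ} i·ν_i < W ≤ Σ_{i=a}^{μ} i·ν_i`, where `ν_i = #{ j : d_j = i }`
and `μ = max_j d_j`.  Then `w(x) ≥ ⌈ (W − Σ_{i=a+1}^{μ} (i−a)·ν_i) / a ⌉`. -/
theorem proposition_weight_lower_bound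
    (p e m : ℕ) (hp : p.Prime) (he : 0 < e) (hm : 0 < m)
    (q : ℕ) (hq : q = p ^ e)
    (F : Type*) [Field F] [Fintype F] [DecidableEq F]
    (hF : Fintype.card F = q ^ m)
    (σ : F → F) (hσ : ∀ x, σ x = x ^ q)
    (s : ℕ) (hs : 0 < s) (d : Fin s → ℕ) (hd : ∀ i, 0 < d i)
    (φ : (Fin s → F) → ((Σ i : Fin s, Fin (d i)) → F))
    (hφ : ∀ x (i : Fin s) (j : Fin (d i)), φ x ⟨i, j⟩ = σ^[(j : ℕ)] (x i))
    (ν : ℕ → ℕ) (hν : ∀ k, ν k = (Finset.univ.filter (fun j : Fin s => d j = k)).card)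
    (μ : ℕ) (hμ : μ = Finset.univ.sup d)
    (x : Fin s → F) (hx : φ x ≠ 0)
    (W : ℕ)
    (hW : W = (Finset.univ.filter (fun t : Σ i : Fin s, Fin (d i) => φ x t ≠ 0)).card)
    (a : ℕ) (ha : 0 < a)
    (halt : ∑ i ∈ Finset.Icc (a + 1) μ, i * ν i < W)
    (hage : W ≤ ∑ i ∈ Finset.Icc a μ, i * ν i) :
    ⌈((W : ℚ) - ((∑ i ∈ Finset.Icc (a + 1) μ, (i - a) * ν i : ℕ) : ℚ)) / (a : ℚ)⌉
      ≤ ((Finset.univ.filter (fun i : Fin s => x i ≠ 0)).card : ℤ) :=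
  proposition_weight_lower_bound_general p e hp q hq F σ hσ s d φ hφ ν hν μ hμ x W hW a ha
end

section
/- (Core of the decoding theorem.) Let t be a nonnegative integer with t + 1 ≤ d_1 + ⋯ + d_s, and let a be the unique positive integer with Σ_{i=a+1}^{μ} i·ν_i < t + 1 ≤ Σ_{i=a}^{μ} i·ν_i, where ν_i = #{ j : d_j = i } and μ = max_j d_j. Then for every x ∈ F^s with Hamming weight w(x) ≤ ⌈ (t + 1 − Σ_{i=a+1}^{μ} (i−a)·ν_i) / a ⌉ − 1, the expanded vector satisfies w(φ(x)) ≤ t. (Hence any t-error-correcting algorithm for the expanded code corrects up to ⌈(t+1 − Σ_{i=a+1}^{μ}(i−a)ν_i)/a⌉ − 1 errors of the generalized algebraic geometry code.) -/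
/-!
Frobenius powers vanish only at `0`, so a nonzero coordinate `x i` contributes exactly `d i`
nonzero entries to `φ x`, and `w(φ x) = ∑_{x i ≠ 0} d i`. Bounding each `d i` by
`a + (d i - a)` and summing the truncated excesses over all `i` gives
`w(φ x) ≤ a · w(x) + ∑_{i > a} (i - a) ν_i`, which the hypothesis on `w(x)` makes `< t + 1`.
-/

open Finset

theorem Finset.card_filter_sigma_ne_zero_s7 {ι M : Type*} [Fintype ι] [Zero M] [DecidableEq M]
    {d : ι → ℕ} (g : (Σ i, Fin (d i)) → M) (x : ι → M)
    (hg : ∀ i j, g ⟨i, j⟩ = 0 ↔ x i = 0) :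
    #{k | g k ≠ 0} = ∑ i ∈ {i | x i ≠ 0}, d i := by
  have hsupp : ({k | g k ≠ 0} : Finset (Σ i, Fin (d i))) = ({i | x i ≠ 0} : Finset ι).sigma
      fun _ => univ := by
    ext ⟨i, j⟩
    simp [hg]
  simp [hsupp, card_sigma]

theorem Finset.sum_le_mul_card_add_sum_tsub_s7 {ι : Type*} [Fintype ι] (d : ι → ℕ) (a : ℕ)
    (E : Finset ι) : ∑ i ∈ E, d i ≤ a * #E + ∑ i, (d i - a) :=
  calc ∑ i ∈ E, d i ≤ ∑ i ∈ E, (a + (d i - a)) := sum_le_sum fun i _ => by omega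
    _ = a * #E + ∑ i ∈ E, (d i - a) := by rw [sum_add_distrib, sum_const, smul_eq_mul, mul_comm]
    _ ≤ a * #E + ∑ i, (d i - a) := by gcongr; exact subset_univ E

theorem Finset.sum_tsub_eq_sum_Icc_mul_card {ι : Type*} [Fintype ι] (d : ι → ℕ) (a μ : ℕ)
    (hμ : ∀ j, d j ≤ μ) :
    ∑ j, (d j - a) = ∑ i ∈ Icc (a + 1) μ, (i - a) * #{j | d j = i} := by
  rw [← sum_filter_ne_zero, ← sum_fiberwise_of_maps_to (t := Icc (a + 1) μ) (g := d)]
  · refine sum_congr rfl fun i hi => ?_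
    rw [filter_filter, sum_congr rfl fun j hj => by rw [(mem_filter.mp hj).2.2], sum_const,
      smul_eq_mul, mul_comm]
    congr 2
    ext j
    simp only [mem_filter, mem_univ, true_and, and_iff_right_iff_imp]
    rintro rfl
    have := (mem_Icc.mp hi).1
    omega
  · intro j hj
    simp only [mem_filter, mem_univ, true_and] at hj
    simp only [mem_Icc]
    exact ⟨by omega, hμ j⟩

theorem Nat.mul_add_lt_of_le_ceil_div_sub_one {n T S a : ℕ} (ha : 0 < a)
    (hn : (n : ℤ) ≤ ⌈((T : ℚ) - S) / a⌉ - 1) : a * n + S < T := by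
  have hlt : (n : ℚ) < ((T : ℚ) - S) / a := by
    exact_mod_cast Int.lt_ceil.mp (Int.lt_of_le_sub_one hn)
  rw [lt_div_iff₀ (by exact_mod_cast ha)] at hlt
  exact_mod_cast (by push_cast; linarith : ((a * n + S : ℕ) : ℚ) < T)

theorem decoding_core_general
    (p e : ℕ) (hp : p.Prime)
    (q : ℕ) (hq : q = p ^ e)
    (F : Type*) [Field F] [DecidableEq F]
    (σ : F → F) (hσ : ∀ x, σ x = x ^ q)
    (s : ℕ) (d : Fin s → ℕ)
    (φ : (Fin s → F) → ((Σ i : Fin s, Fin (d i)) → F))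
    (hφ : ∀ x (i : Fin s) (j : Fin (d i)), φ x ⟨i, j⟩ = σ^[(j : ℕ)] (x i))
    (ν : ℕ → ℕ) (hν : ∀ k, ν k = (Finset.univ.filter (fun j : Fin s => d j = k)).card)
    (μ : ℕ) (hμ : μ = Finset.univ.sup d)
    (t : ℕ)
    (a : ℕ) (ha : 0 < a) :
    ∀ x : Fin s → F,
      ((Finset.univ.filter (fun i : Fin s => x i ≠ 0)).card : ℤ)
          ≤ ⌈(((t : ℚ) + 1) - ((∑ i ∈ Finset.Icc (a + 1) μ, (i - a) * ν i : ℕ) : ℚ))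
              / (a : ℚ)⌉ - 1 →
      (Finset.univ.filter (fun k : Σ i : Fin s, Fin (d i) => φ x k ≠ 0)).card ≤ t := by
  intro x hx
  have hσ0 : ∀ y, σ y = 0 ↔ y = 0 := fun y => by
    rw [hσ, pow_eq_zero_iff (hq ▸ pow_ne_zero e hp.ne_zero)]
  have hexcess : ∑ j, (d j - a) = ∑ i ∈ Icc (a + 1) μ, (i - a) * ν i := by
    simp only [hν]
    exact sum_tsub_eq_sum_Icc_mul_card d a μ fun j => hμ ▸ le_sup (mem_univ j)
  have hlt : a * #{i | x i ≠ 0} + ∑ i ∈ Icc (a + 1) μ, (i - a) * ν i < t + 1 :=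
    Nat.mul_add_lt_of_le_ceil_div_sub_one ha (by rwa [Nat.cast_succ])
  rw [card_filter_sigma_ne_zero_s7 (φ x) x fun i j => by rw [hφ, Function.iterate_eq_zero_iff hσ0]]
  calc ∑ i ∈ {i | x i ≠ 0}, d i ≤ a * #{i | x i ≠ 0} + ∑ j, (d j - a) :=
        sum_le_mul_card_add_sum_tsub_s7 d a _
    _ ≤ t := by omega

/-- core of the decoding theorem: Let `t ≥ 0` with
`t + 1 ≤ d_1 + ⋯ + d_s`, and let `a` be the unique positive integer with
`Σ_{i=a+1}^{μ} i·ν_i < t + 1 ≤ Σ_{i=a}^{μ} i·ν_i`.  Then for every `x ∈ F^s`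
with Hamming weight `w(x) ≤ ⌈(t + 1 − Σ_{i=a+1}^{μ} (i−a)·ν_i)/a⌉ − 1`, the
expanded vector satisfies `w(φ(x)) ≤ t`.  (Hence any `t`-error-correcting
algorithm for the expanded code corrects up to
`⌈(t+1 − Σ_{i=a+1}^{μ}(i−a)ν_i)/a⌉ − 1` errors of the generalized AG code.) -/
theorem decoding_core
    (p e m : ℕ) (hp : p.Prime) (he : 0 < e) (hm : 0 < m)
    (q : ℕ) (hq : q = p ^ e)
    (F : Type*) [Field F] [Fintype F] [DecidableEq F]
    (hF : Fintype.card F = q ^ m)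
    (σ : F → F) (hσ : ∀ x, σ x = x ^ q)
    (s : ℕ) (hs : 0 < s) (d : Fin s → ℕ) (hd : ∀ i, 0 < d i)
    (φ : (Fin s → F) → ((Σ i : Fin s, Fin (d i)) → F))
    (hφ : ∀ x (i : Fin s) (j : Fin (d i)), φ x ⟨i, j⟩ = σ^[(j : ℕ)] (x i))
    (ν : ℕ → ℕ) (hν : ∀ k, ν k = (Finset.univ.filter (fun j : Fin s => d j = k)).card)
    (μ : ℕ) (hμ : μ = Finset.univ.sup d)
    (t : ℕ) (ht : t + 1 ≤ ∑ i, d i)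
    (a : ℕ) (ha : 0 < a)
    (halt : ∑ i ∈ Finset.Icc (a + 1) μ, i * ν i < t + 1)
    (hage : t + 1 ≤ ∑ i ∈ Finset.Icc a μ, i * ν i) :
    ∀ x : Fin s → F,
      ((Finset.univ.filter (fun i : Fin s => x i ≠ 0)).card : ℤ)
          ≤ ⌈(((t : ℚ) + 1) - ((∑ i ∈ Finset.Icc (a + 1) μ, (i - a) * ν i : ℕ) : ℚ))
              / (a : ℚ)⌉ - 1 →
      (Finset.univ.filter (fun k : Σ i : Fin s, Fin (d i) => φ x k ≠ 0)).card ≤ t :=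
  decoding_core_general p e hp q hq F σ hσ s d φ hφ ν hν μ hμ t a ha
end
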